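/- arXiv:math/0303017 — 4 statements merged into one kernel-verified Lean document; each statement's English description precedes it below -/
import Mathlib

section
/- Let F be a field and suppose given two exact triangles of finite-dimensional F-vector spaces: a₁ : A → E₁, b₁ : E₁ → B, δ₁ : B → A, and a₂ : B → E₂, b₂ : E₂ → C, δ₂ : C → B. Assume dim E₁ = dim E₂ = 1, dim A = dim C = n, that the composite δ₁ ∘ δ₂ : C → A is zero, and that there exists a linear isomorphism φ : A → C for which the composite δ₂ ∘ φ ∘ δ₁ : B → B is zero. Then n ≤ 1 and dim B = 1 − n. (This is the common algebraic core of Lemmas 3.1 and 3.2 of the paper: the triangles are the rolled-up homology long exact sequences of the two short exact sequences of complexes appearing there, φ is induced by the U-translation, and the two vanishing composites come from D² = 0 on larger subquotient complexes.) -/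
open Module

/-! Chaining rank–nullity around an exact triangle `A → E → B → A` gives
`dim A + dim B = dim E + 2 rank δ`. Applied to the two triangles with `dim E = 1`, both
connecting maps have the same rank `r`, with `dim A + dim B = 1 + 2r`. The vanishing composites put
`range δ₂` inside `ker δ₁` and `φ (range δ₁)` inside `ker δ₂`, so `2r ≤ dim B` and `2r ≤ n`; hence
`4r ≤ 1 + 2r`, i.e. `r = 0`, and `n + dim B = 1`. -/

variable {F : Type*} [Field F]

structure IsExactTriangle {A E B : Type*} [AddCommGroup A] [Module F A] [AddCommGroup E]
    [Module F E] [AddCommGroup B] [Module F B]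
    (a : A →ₗ[F] E) (b : E →ₗ[F] B) (δ : B →ₗ[F] A) : Prop where
  range_left_eq_ker : LinearMap.range a = LinearMap.ker b
  range_right_eq_ker : LinearMap.range b = LinearMap.ker δ
  range_connecting_eq_ker : LinearMap.range δ = LinearMap.ker a

theorem IsExactTriangle.finrank_add_two_mul_finrank_range_connecting
    {A E B : Type*} [AddCommGroup A] [Module F A] [FiniteDimensional F A]
    [AddCommGroup E] [Module F E] [FiniteDimensional F E]
    [AddCommGroup B] [Module F B] [FiniteDimensional F B]
    {a : A →ₗ[F] E} {b : E →ₗ[F] B} {δ : B →ₗ[F] A} (h : IsExactTriangle a b δ) :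
    finrank F E + 2 * finrank F (LinearMap.range δ) = finrank F A + finrank F B := by
  have rank_nullity_a := LinearMap.finrank_range_add_finrank_ker a
  have rank_nullity_b := LinearMap.finrank_range_add_finrank_ker b
  have rank_nullity_δ := LinearMap.finrank_range_add_finrank_ker δ
  rw [← h.range_connecting_eq_ker] at rank_nullity_a
  rw [← h.range_left_eq_ker] at rank_nullity_b
  rw [← h.range_right_eq_ker] at rank_nullity_δ
  omega

theorem LinearMap.finrank_range_add_finrank_range_le_of_comp_eq_zero
    {M N P : Type*} [AddCommGroup M] [Module F M] [AddCommGroup N] [Module F N]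
    [FiniteDimensional F N] [AddCommGroup P] [Module F P]
    (f : M →ₗ[F] N) (g : N →ₗ[F] P) (h : g ∘ₗ f = 0) :
    finrank F (range f) + finrank F (range g) ≤ finrank F N := by
  have hle : finrank F (range f) ≤ finrank F (ker g) :=
    Submodule.finrank_mono (range_le_ker_iff.mpr h)
  have := finrank_range_add_finrank_ker g
  omega

theorem LinearMap.finrank_range_equiv_comp {M N P : Type*} [AddCommGroup M] [Module F M]
    [AddCommGroup N] [Module F N] [AddCommGroup P] [Module F P]
    (e : N ≃ₗ[F] P) (f : M →ₗ[F] N) :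
    finrank F (range (e.toLinearMap ∘ₗ f)) = finrank F (range f) := by
  rw [range_comp]
  exact e.finrank_map_eq _

/-- The common algebraic core of Lemmas 3.1 and 3.2: given two exact triangles
`A → E₁ → B → A` and `B → E₂ → C → B` of finite-dimensional vector spaces with
`dim E₁ = dim E₂ = 1` and `dim A = dim C = n`, if `δ₁ ∘ δ₂ = 0` and there is an
isomorphism `φ : A ≃ C` with `δ₂ ∘ φ ∘ δ₁ = 0`, then `n ≤ 1` and `dim B = 1 - n`. -/
theorem two_triangles_core (F : Type) [Field F]
    (A E₁ B E₂ C : Type)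
    [AddCommGroup A] [Module F A] [FiniteDimensional F A]
    [AddCommGroup E₁] [Module F E₁] [FiniteDimensional F E₁]
    [AddCommGroup B] [Module F B] [FiniteDimensional F B]
    [AddCommGroup E₂] [Module F E₂] [FiniteDimensional F E₂]
    [AddCommGroup C] [Module F C] [FiniteDimensional F C]
    (a₁ : A →ₗ[F] E₁) (b₁ : E₁ →ₗ[F] B) (δ₁ : B →ₗ[F] A)
    (a₂ : B →ₗ[F] E₂) (b₂ : E₂ →ₗ[F] C) (δ₂ : C →ₗ[F] B)
    (h1a : LinearMap.range a₁ = LinearMap.ker b₁)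
    (h1b : LinearMap.range b₁ = LinearMap.ker δ₁)
    (h1c : LinearMap.range δ₁ = LinearMap.ker a₁)
    (h2a : LinearMap.range a₂ = LinearMap.ker b₂)
    (h2b : LinearMap.range b₂ = LinearMap.ker δ₂)
    (h2c : LinearMap.range δ₂ = LinearMap.ker a₂)
    (n : ℕ)
    (hE₁ : finrank F E₁ = 1) (hE₂ : finrank F E₂ = 1)
    (hA : finrank F A = n) (hC : finrank F C = n)
    (hδδ : δ₁ ∘ₗ δ₂ = 0)
    (hφ : ∃ φ : A ≃ₗ[F] C, δ₂ ∘ₗ (φ.toLinearMap ∘ₗ δ₁) = 0) :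
    n ≤ 1 ∧ finrank F B = 1 - n := by
  obtain ⟨φ, hφ⟩ := hφ
  have triangle₁ := IsExactTriangle.finrank_add_two_mul_finrank_range_connecting
    (⟨h1a, h1b, h1c⟩ : IsExactTriangle a₁ b₁ δ₁)
  have triangle₂ := IsExactTriangle.finrank_add_two_mul_finrank_range_connecting
    (⟨h2a, h2b, h2c⟩ : IsExactTriangle a₂ b₂ δ₂)
  have bound_B := LinearMap.finrank_range_add_finrank_range_le_of_comp_eq_zero δ₂ δ₁ hδδ
  have bound_C := LinearMap.finrank_range_add_finrank_range_le_of_comp_eq_zero _ δ₂ hφ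
  rw [LinearMap.finrank_range_equiv_comp] at bound_C
  omega
end

section
/- Fix integers p, q, k with 0 < k < p, gcd(k,p) = 1 and gcd(q,p) = 1, and let A₁A₂⋯A_M be the associated Berge word with partial sums S_n. Then the sequence S₁, S₂, …, S_M attains its maximum value at exactly one index n ∈ {1,…,M}, and attains its minimum value at exactly one index n ∈ {1,…,M}. (This is the verification, in the proof of Proposition 1.9 of the paper, of Brown's criterion for the Berge relator, showing that the kernel of the abelianization homomorphism is finitely generated and hence that lens space Berge knots are fibered.) -/
namespace Berge

/-- `E i = 1` if the residue of `i·q` modulo `p` lies in `{0, 1, …, k−1}`, and `0`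
otherwise. -/
def E (p q k : ℕ) (i : ℕ) : ℕ := if (i * q) % p < k then 1 else 0

/-- The Berge word associated to `(p,q,k)`: the concatenation, for `i = 1, …, p` in order,
of the letter `X` (encoded `false`) followed by `E i` copies of the letter `Y`
(encoded `true`). -/
def word (p q k : ℕ) : List Bool :=
  (List.range p).flatMap fun i => false :: List.replicate (E p q k (i + 1)) true

/-- The weight `χ` with `χ(X) = −k` and `χ(Y) = p`. -/
def chi (p k : ℕ) : Bool → ℤ := fun b => if b then (p : ℤ) else -(k : ℤ)

/-- The partial sum `S_n = χ(A₁) + ⋯ + χ(A_n)` of the Berge word. -/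
def S (p q k : ℕ) (n : ℕ) : ℤ := (((word p q k).take n).map (chi p k)).sum

end Berge

open Berge

private lemma count_true_add_count_false (l : List Bool) :
    l.count true + l.count false = l.length := by
  induction l with
  | nil => simp
  | cons b t ih => cases b <;> simp [List.count_cons] <;> omega

private lemma sum_map_chi (p k : ℕ) (l : List Bool) :
    (l.map (chi p k)).sum = (p : ℤ) * l.count true - (k : ℤ) * l.count false := by
  induction l with
  | nil => simp
  | cons b t ih => cases b <;> simp [chi, List.count_cons, ih] <;> ring

private lemma count_false_flatMap (f : ℕ → ℕ) (n : ℕ) :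
    ((List.range n).flatMap fun i => false :: List.replicate (f i) true).count false = n := by
  induction n with
  | zero => simp
  | succ n ih =>
    rw [List.range_succ, List.flatMap_append]
    simp [List.count_append, ih, List.count_replicate]

private lemma word_count_false (p q k : ℕ) : (word p q k).count false = p :=
  count_false_flatMap _ p

private lemma word_eq_cons (p q k : ℕ) (hp : 0 < p) :
    ∃ t, word p q k = false :: t := by
  obtain ⟨p', rfl⟩ : ∃ p', p = p' + 1 := ⟨p - 1, by omega⟩
  unfold word
  rw [List.range_succ_eq_map, List.flatMap_cons]
  exact ⟨_, rfl⟩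

private lemma one_le_count_false_take (p q k n : ℕ) (hp : 0 < p) (hn : 1 ≤ n) :
    1 ≤ ((word p q k).take n).count false := by
  obtain ⟨t, ht⟩ := word_eq_cons p q k hp
  obtain ⟨n', rfl⟩ : ∃ n', n = n' + 1 := ⟨n - 1, by omega⟩
  rw [ht, List.take_succ_cons]
  simp [List.count_cons]

private lemma count_take_le_count_take (l : List Bool) (b : Bool) {n m : ℕ} (h : n ≤ m) :
    (l.take n).count b ≤ (l.take m).count b := by
  have h1 : l.take n = (l.take m).take n := by rw [List.take_take, Nat.min_eq_left h]
  rw [h1]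
  exact ((l.take m).take_sublist n).count_le b

private lemma S_injOn (p q k : ℕ) (hk0 : 0 < k) (hkp : k < p) (hk : Nat.gcd k p = 1)
    {n m : ℕ} (hn : n ∈ Finset.Icc 1 (word p q k).length)
    (hm : m ∈ Finset.Icc 1 (word p q k).length) (hS : S p q k n = S p q k m) : n = m := by
  simp only [Finset.mem_Icc] at hn hm
  have hp : 0 < p := lt_trans hk0 hkp
  -- wlog n ≤ m
  wlog hle : n ≤ m generalizing n m
  · exact (this hS.symm hm hn (by omega)).symm
  set w := word p q k with hw
  set cF : ℕ → ℕ := fun j => (w.take j).count false with hcF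
  set cT : ℕ → ℕ := fun j => (w.take j).count true with hcT
  have hSdef : ∀ j, S p q k j = (p : ℤ) * cT j - (k : ℤ) * cF j := fun j => sum_map_chi p k _
  have hmonoF : cF n ≤ cF m := count_take_le_count_take w false hle
  have hmonoT : cT n ≤ cT m := count_take_le_count_take w true hle
  have hcFm_le : cF m ≤ p := by
    have := ((w.take_sublist m).count_le false)
    rw [word_count_false p q k] at this
    exact this
  have hcFn_ge : 1 ≤ cF n := one_le_count_false_take p q k n hp hn.1
  rw [hSdef n, hSdef m] at hS
  -- p * (cT m - cT n) = k * (cF m - cF n)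
  have key : (p : ℤ) * ((cT m : ℤ) - cT n) = (k : ℤ) * ((cF m : ℤ) - cF n) := by ring_nf; linarith [hS]
  have hcop : IsCoprime (p : ℤ) (k : ℤ) := by
    rw [Int.isCoprime_iff_gcd_eq_one]
    simpa [Nat.gcd_comm] using hk
  have hdvd : (p : ℤ) ∣ ((cF m : ℤ) - cF n) := by
    have : (p : ℤ) ∣ (k : ℤ) * ((cF m : ℤ) - cF n) := ⟨_, key.symm⟩
    exact hcop.dvd_of_dvd_mul_left this
  have ha : (cF m : ℤ) - cF n = 0 := by
    obtain ⟨c, hc⟩ := hdvd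
    have h0 : 0 ≤ (p : ℤ) * c := by rw [← hc]; push_cast; omega
    have h1 : (p : ℤ) * c < p := by rw [← hc]; push_cast; omega
    have hc0 : c = 0 := by nlinarith [Int.natCast_pos.mpr hp]
    rw [hc, hc0, mul_zero]
  have hb : (cT m : ℤ) - cT n = 0 := by
    rw [ha, mul_zero] at key
    have : (cT m : ℤ) - cT n = 0 := by
      have hp' : (0:ℤ) < p := Int.natCast_pos.mpr hp
      exact (mul_eq_zero.mp key).resolve_left (by linarith)
    exact this
  have hFeq : cF m = cF n := by omega
  have hTeq : cT m = cT n := by omega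
  have hlen : ∀ j, j ≤ w.length → cT j + cF j = j := by
    intro j hj
    have := count_true_add_count_false (w.take j)
    rwa [List.length_take, Nat.min_eq_left hj] at this
  have := hlen n hn.2
  have := hlen m hm.2
  omega

open Berge in
/-- The partial-sum sequence `S₁, …, S_M` of the Berge word attains its maximum at exactly
one index in `{1, …, M}`, and its minimum at exactly one index (Brown's criterion for the
Berge relator). -/
theorem berge_unique_max_and_min (p q k : ℕ)
    (hk0 : 0 < k) (hkp : k < p) (hk : Nat.gcd k p = 1) (hq : Nat.gcd q p = 1) :
    (∃! n : ℕ, n ∈ Finset.Icc 1 (word p q k).length ∧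
      ∀ m ∈ Finset.Icc 1 (word p q k).length, S p q k m ≤ S p q k n) ∧
    (∃! n : ℕ, n ∈ Finset.Icc 1 (word p q k).length ∧
      ∀ m ∈ Finset.Icc 1 (word p q k).length, S p q k n ≤ S p q k m) := by
  have hp : 0 < p := lt_trans hk0 hkp
  have hM : 1 ≤ (word p q k).length := by
    have h1 : (word p q k).count false ≤ (word p q k).length := List.count_le_length
    rw [word_count_false p q k] at h1
    omega
  have hne : (Finset.Icc 1 (word p q k).length).Nonempty :=
    ⟨1, Finset.mem_Icc.mpr ⟨le_refl 1, hM⟩⟩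
  constructor
  · obtain ⟨b, hb, hmax⟩ := Finset.exists_max_image _ (S p q k) hne
    refine ⟨b, ⟨hb, hmax⟩, ?_⟩
    rintro y ⟨hy, hymax⟩
    exact S_injOn p q k hk0 hkp hk hy hb (le_antisymm (hmax y hy) (hymax b hb))
  · obtain ⟨b, hb, hmin⟩ := Finset.exists_min_image _ (S p q k) hne
    refine ⟨b, ⟨hb, hmin⟩, ?_⟩
    rintro y ⟨hy, hymin⟩
    exact S_injOn p q k hk0 hkp hk hy hb (le_antisymm (hymin b hb) (hmin y hy))
end

section
/- Fix integers p, q, k with 0 < k < p, gcd(k,p) = 1 and gcd(q,p) = 1, and let A₁A₂⋯A_M be the associated Berge word with partial sums S_n. Then every index n ∈ {1,…,M} at which the sequence S₁,…,S_M attains its maximum value satisfies A_n = Y, and every index n ∈ {1,…,M} at which it attains its minimum value satisfies n < M and A_{n+1} = Y. -/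
open Finset in
theorem sum_range_add_mul_mod_of_coprime {M : Type*} [AddCommMonoid M] {p q : ℕ}
    (hq : q.Coprime p) (a : ℕ) (g : ℕ → M) :
    ∑ i ∈ range p, g ((i + a) * q % p) = ∑ i ∈ range p, g i := by
  rcases p.eq_zero_or_pos with rfl | hp
  · simp
  have hmaps : Set.MapsTo (fun i => (i + a) * q % p) (range p) (range p) :=
    fun i _ => mem_range.2 (Nat.mod_lt _ hp)
  have hinj : Set.InjOn (fun i => (i + a) * q % p) (range p) := by
    intro i hi j hj hij
    have hmod : i ≡ j [MOD p] :=
      Nat.ModEq.add_right_cancel' a (Nat.ModEq.cancel_right_of_coprime hq.symm hij)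
    rwa [Nat.ModEq, Nat.mod_eq_of_lt (mem_range.1 hi), Nat.mod_eq_of_lt (mem_range.1 hj)] at hmod
  exact sum_nbij _ hmaps hinj (surjOn_of_injOn_of_card_le _ hmaps hinj le_rfl) fun _ _ => rfl

namespace Berge

open Finset

theorem sum_E_succ {p q k : ℕ} (hkp : k ≤ p) (hq : q.Coprime p) :
    ∑ i ∈ range p, E p q k (i + 1) = k := by
  refine (sum_range_add_mul_mod_of_coprime hq 1 fun r => if r < k then 1 else 0).trans ?_
  rw [sum_boole, range_eq_Ico, Ico_filter_lt]
  simp [hkp]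

theorem sum_map_chi_word (p q k : ℕ) :
    ((word p q k).map (chi p k)).sum = ∑ i ∈ range p, (-(k : ℤ) + E p q k (i + 1) * p) := by
  change _ = ((List.range p).map fun i => -(k : ℤ) + E p q k (i + 1) * p).sum
  rw [word, List.map_flatMap, List.flatMap, List.sum_flatten, List.map_map]
  congr 1
  refine List.map_congr_left fun i _ => ?_
  simp [chi, mul_comm]

theorem S_length_word {p q k : ℕ} (hkp : k ≤ p) (hq : q.Coprime p) :
    S p q k (word p q k).length = 0 := by
  rw [S, List.take_length, sum_map_chi_word, sum_add_distrib, ← sum_mul, ← Nat.cast_sum,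
    sum_E_succ hkp hq]
  simp [mul_comm]

theorem S_succ {p q k n : ℕ} (hn : n < (word p q k).length) :
    S p q k (n + 1) = S p q k n + chi p k ((word p q k).getD n false) := by
  rw [S, S, List.take_add_one, List.getElem?_eq_getElem hn, List.getD_eq_getElem _ _ hn]
  simp only [List.map_append, List.sum_append, Option.toList_some, List.map_cons, List.map_nil,
    List.sum_cons, List.sum_nil, add_zero]

theorem S_succ_lt_of_getD_eq_false {p q k n : ℕ} (hk : 0 < k) (hn : n < (word p q k).length)
    (hX : (word p q k).getD n false = false) : S p q k (n + 1) < S p q k n := by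
  rw [S_succ hn, hX, chi]
  simp [hk]

theorem S_one {p q k : ℕ} (hp : 0 < p) : S p q k 1 = -k := by
  obtain ⟨m, rfl⟩ := Nat.exists_eq_add_of_lt hp
  simp [S, word, List.range_succ_eq_map, chi]

theorem length_word_pos {p q k : ℕ} (hp : 0 < p) : 0 < (word p q k).length := by
  obtain ⟨m, rfl⟩ := Nat.exists_eq_add_of_lt hp
  simp [word, List.range_succ_eq_map]

end Berge

open Berge in
theorem berge_extrema_on_Y_general (p q k : ℕ)
    (hk0 : 0 < k) (hkp : k < p) (hq : Nat.gcd q p = 1) :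
    (∀ n ∈ Finset.Icc 1 (word p q k).length,
      (∀ m ∈ Finset.Icc 1 (word p q k).length, S p q k m ≤ S p q k n) →
      (word p q k).getD (n - 1) false = true) ∧
    (∀ n ∈ Finset.Icc 1 (word p q k).length,
      (∀ m ∈ Finset.Icc 1 (word p q k).length, S p q k n ≤ S p q k m) →
      n < (word p q k).length ∧ (word p q k).getD n false = true) := by
  have hp : 0 < p := hk0.trans hkp
  have hlen_pos := length_word_pos (q := q) (k := k) hp
  have hS1_lt_SM : S p q k 1 < S p q k (word p q k).length := by
    rw [S_one hp, S_length_word hkp.le hq]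
    exact neg_lt_zero.2 (Int.natCast_pos.2 hk0)
  simp only [Finset.mem_Icc]
  refine ⟨fun n hn hmax => ?_, fun n hn hmin => ?_⟩
  · by_contra hX
    rw [Bool.not_eq_true] at hX
    obtain rfl | hn2 : n = 1 ∨ 2 ≤ n := by omega
    · exact (hmax _ ⟨hlen_pos, le_rfl⟩).not_gt hS1_lt_SM
    · have hdrop := S_succ_lt_of_getD_eq_false hk0 (by omega) hX
      rw [Nat.sub_add_cancel (by omega)] at hdrop
      exact (hmax (n - 1) ⟨by omega, by omega⟩).not_gt hdrop
  · have hnM : n < (word p q k).length := by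
      refine lt_of_le_of_ne hn.2 fun h => ?_
      subst h
      exact (hmin 1 ⟨le_rfl, hlen_pos⟩).not_gt hS1_lt_SM
    refine ⟨hnM, ?_⟩
    by_contra hX
    rw [Bool.not_eq_true] at hX
    exact (hmin (n + 1) ⟨by omega, hnM⟩).not_gt (S_succ_lt_of_getD_eq_false hk0 hnM hX)

open Berge in
/-- Every index `n ∈ {1,…,M}` at which the partial-sum sequence of the Berge word attains
its maximum satisfies `Aₙ = Y`, and every index at which it attains its minimum satisfies
`n < M` and `A_{n+1} = Y`. -/
theorem berge_extrema_on_Y (p q k : ℕ)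
    (hk0 : 0 < k) (hkp : k < p) (hk : Nat.gcd k p = 1) (hq : Nat.gcd q p = 1) :
    (∀ n ∈ Finset.Icc 1 (word p q k).length,
      (∀ m ∈ Finset.Icc 1 (word p q k).length, S p q k m ≤ S p q k n) →
      (word p q k).getD (n - 1) false = true) ∧
    (∀ n ∈ Finset.Icc 1 (word p q k).length,
      (∀ m ∈ Finset.Icc 1 (word p q k).length, S p q k n ≤ S p q k m) →
      n < (word p q k).length ∧ (word p q k).getD n false = true) :=
  berge_extrema_on_Y_general p q k hk0 hkp hq
end

section
/- Fix integers p, q, k with 0 < k < p, gcd(k,p) = 1 and gcd(q,p) = 1, and let A₁A₂⋯A_M be the associated Berge word with partial sums S_n. Let n₁ < n₂ < … < n_K be the complete list of indices n ∈ {1,…,M} with A_n = Y. Then for every t ∈ {1,…,K} one has S_{n_t} ≡ t·p (mod k), and the values S_{n₁}, S_{n₂}, …, S_{n_K} are pairwise distinct. -/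
namespace Berge

lemma sum_chi (p k : ℕ) (l : List Bool) :
    (l.map (chi p k)).sum = (p : ℤ) * l.count true - (k : ℤ) * l.count false := by
  induction l with
  | nil => simp
  | cons b l ih =>
    cases b <;> simp [chi, ih, List.count_cons] <;> ring

lemma count_take (l : List Bool) (n : ℕ) :
    ((l.take n).count true : ℕ)
      = ((Finset.range n).filter fun j => l.getD j false = true).card := by
  induction n with
  | zero => simp
  | succ n ih =>
    rw [List.take_succ, List.count_append, Finset.range_add_one, Finset.filter_insert]
    by_cases h : n < l.length
    · rw [List.getElem?_eq_getElem h]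
      rw [List.getD_eq_getElem l false h]
      by_cases hb : l[n] = true
      · rw [if_pos hb, Finset.card_insert_of_notMem (by simp), ih, hb]; simp
      · rw [if_neg hb, ih]
        simp at hb; simp [hb]
    · rw [List.getElem?_eq_none (by omega)]
      rw [if_neg (by rw [List.getD_eq_default l false (by omega)]; simp), ih]
      simp

lemma sum_map_range (f : ℕ → ℕ) (n : ℕ) :
    ((List.range n).map f).sum = ∑ i ∈ Finset.range n, f i := by
  induction n with
  | zero => simp
  | succ n ih => rw [List.range_succ, Finset.sum_range_succ, List.map_append]; simp [ih]

lemma count_word (p q k : ℕ) (hk0 : 0 < k) (hkp : k < p) (hq : Nat.gcd q p = 1) :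
    (word p q k).count true = k := by
  have h1 : (word p q k).count true
      = (((Finset.range p).filter fun i => ((i+1) * q) % p < k)).card := by
    rw [word, List.count_flatMap, sum_map_range]
    rw [Finset.card_eq_sum_ones, Finset.sum_filter]
    apply Finset.sum_congr rfl
    intro i _
    simp [E, Function.comp_def]
  have hp0 : 0 < p := by omega
  set g : ℕ → ℕ := fun i => ((i+1) * q) % p with hg
  have hinj : Set.InjOn g (Finset.range p) := by
    intro i hi j hj hij
    simp only [Finset.mem_coe, Finset.mem_range] at hi hj
    have h2 : (i+1) * q ≡ (j+1) * q [MOD p] := hij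
    have h3 : i + 1 ≡ j + 1 [MOD p] :=
      Nat.ModEq.cancel_right_of_coprime (by rwa [Nat.gcd_comm] at hq) h2
    have h4 : (i+1) % p = (j+1) % p := h3
    have e1 : (i+1) % p = if i + 1 = p then 0 else i + 1 := by
      split
      · simp [*]
      · exact Nat.mod_eq_of_lt (by omega)
    have e2 : (j+1) % p = if j + 1 = p then 0 else j + 1 := by
      split
      · simp [*]
      · exact Nat.mod_eq_of_lt (by omega)
    rw [e1, e2] at h4
    split at h4 <;> split at h4 <;> omega
  have himg : (Finset.range p).image g = Finset.range p := by
    apply Finset.eq_of_subset_of_card_le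
    · intro r hr
      simp only [Finset.mem_image, Finset.mem_range] at hr ⊢
      obtain ⟨i, _, rfl⟩ := hr
      exact Nat.mod_lt _ hp0
    · rw [Finset.card_image_of_injOn hinj]
  have hfe := (Finset.filter_image (s := Finset.range p) (f := g) (p := (· < k))).symm
  rw [himg] at hfe
  have hrk : (Finset.range p).filter (· < k) = Finset.range k := by
    ext x; simp only [Finset.mem_filter, Finset.mem_range]; omega
  rw [h1]
  have hc : (((Finset.range p).filter fun i => g i < k)).card
      = (((Finset.range p).filter fun a => g a < k).image g).card :=
    (Finset.card_image_of_injOn (hinj.mono (by intro x hx; simp at hx ⊢; exact hx.1))).symm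
  rw [hc, hfe, hrk, Finset.card_range]

end Berge
open Berge in
/-- If `n₁ < n₂ < … < n_K` is the complete list of indices `n ∈ {1,…,M}` with `Aₙ = Y` in
the Berge word, then `S_{n_t} ≡ t·p (mod k)` for each `t`, and the values `S_{n_t}` are
pairwise distinct.  (Here `ns : Fin K → ℕ` is `0`-indexed, so `ns ⟨t-1⟩ = n_t`.) -/
theorem berge_Y_partial_sums (p q k : ℕ)
    (hk0 : 0 < k) (hkp : k < p) (hk : Nat.gcd k p = 1) (hq : Nat.gcd q p = 1)
    (K : ℕ) (ns : Fin K → ℕ) (hmono : StrictMono ns)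
    (hmem : ∀ t : Fin K, ns t ∈ Finset.Icc 1 (word p q k).length)
    (hY : ∀ t : Fin K, (word p q k).getD (ns t - 1) false = true)
    (hcomplete : ∀ n ∈ Finset.Icc 1 (word p q k).length,
      (word p q k).getD (n - 1) false = true → ∃ t : Fin K, ns t = n) :
    (∀ t : Fin K, S p q k (ns t) ≡ ((t : ℕ) + 1) * (p : ℤ) [ZMOD (k : ℕ)]) ∧
    Function.Injective fun t : Fin K => S p q k (ns t) := by
  set w := word p q k with hw
  have hmem' : ∀ t : Fin K, 1 ≤ ns t ∧ ns t ≤ w.length := by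
    intro t
    have := hmem t
    rw [Finset.mem_Icc] at this
    exact this
  -- counting lemma: number of `true`s among the first `ns t` letters is `t + 1`
  have hT : ∀ t : Fin K, (w.take (ns t)).count true = (t : ℕ) + 1 := by
    intro t
    rw [count_take]
    have hcard : ((Finset.Iic t).card : ℕ) = (t : ℕ) + 1 := Fin.card_Iic t
    rw [← hcard]
    apply (Finset.card_bij (fun (a : Fin K) _ => ns a - 1) ?_ ?_ ?_).symm
    · intro a ha
      rw [Finset.mem_Iic] at ha
      rw [Finset.mem_filter, Finset.mem_range]
      have h1 := (hmem' a).1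
      have h2 : ns a ≤ ns t := hmono.monotone ha
      refine ⟨by omega, ?_⟩
      exact hY a
    · intro a _ b _ hab
      have h1 := (hmem' a).1
      have h2 := (hmem' b).1
      exact hmono.injective (by omega)
    · intro j hj
      rw [Finset.mem_filter, Finset.mem_range] at hj
      obtain ⟨hjlt, hjY⟩ := hj
      have hle : j + 1 ≤ w.length := by have := (hmem' t).2; omega
      obtain ⟨t', ht'⟩ := hcomplete (j + 1) (Finset.mem_Icc.mpr ⟨by omega, hle⟩)
        (by simpa using hjY)
      have ht'le : t' ∈ Finset.Iic t := by
        rw [Finset.mem_Iic, ← hmono.le_iff_le]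
        omega
      exact ⟨t', ht'le, by omega⟩
  -- expression for the partial sums
  have hS : ∀ t : Fin K, S p q k (ns t)
      = (p : ℤ) * (((t : ℕ) : ℤ) + 1) - (k : ℤ) * ((w.take (ns t)).count false) := by
    intro t
    rw [S, sum_chi, ← hw, hT t]
    push_cast
    ring
  have hmod : ∀ t : Fin K, S p q k (ns t) ≡ ((t : ℕ) + 1) * (p : ℤ) [ZMOD (k : ℕ)] := by
    intro t
    rw [Int.ModEq]
    have : ((t : ℕ) + 1) * (p : ℤ) - S p q k (ns t)
        = (k : ℤ) * ((w.take (ns t)).count false) := by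
      rw [hS t]; ring
    have hdvd : ((k : ℕ) : ℤ) ∣ ((t : ℕ) + 1) * (p : ℤ) - S p q k (ns t) :=
      ⟨_, this⟩
    exact (Int.modEq_iff_dvd.mpr hdvd)
  refine ⟨hmod, ?_⟩
  -- K = k
  have hK : K = k := by
    have hcw : w.count true = k := count_word p q k hk0 hkp hq
    have hcw' : (w.take w.length).count true = k := by
      rwa [List.take_length]
    rw [count_take] at hcw'
    have : K = ((Finset.range w.length).filter fun j => w.getD j false = true).card := by
      rw [← Fintype.card_fin K, ← Finset.card_univ]
      apply Finset.card_bij (fun (a : Fin K) _ => ns a - 1)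
      · intro a _
        rw [Finset.mem_filter, Finset.mem_range]
        have h1 := (hmem' a).1
        have h2 := (hmem' a).2
        exact ⟨by omega, hY a⟩
      · intro a _ b _ hab
        have h1 := (hmem' a).1
        have h2 := (hmem' b).1
        exact hmono.injective (by omega)
      · intro j hj
        rw [Finset.mem_filter, Finset.mem_range] at hj
        obtain ⟨hjlt, hjY⟩ := hj
        obtain ⟨t', ht'⟩ := hcomplete (j + 1) (Finset.mem_Icc.mpr ⟨by omega, by omega⟩)
          (by simpa using hjY)
        exact ⟨t', Finset.mem_univ _, by omega⟩
    omega
  -- injectivity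
  intro t1 t2 h
  simp only at h
  have h1 := hmod t1
  have h2 := hmod t2
  rw [h] at h1
  have h3 : ((t1 : ℕ) + 1) * (p : ℤ) ≡ ((t2 : ℕ) + 1) * (p : ℤ) [ZMOD (k : ℕ)] :=
    h1.symm.trans h2
  have hdvd : ((k : ℕ) : ℤ) ∣ (((t2 : ℕ) : ℤ) - ((t1 : ℕ) : ℤ)) * (p : ℤ) := by
    have := Int.ModEq.dvd h3
    have he : ((t2 : ℕ) + 1) * (p : ℤ) - ((t1 : ℕ) + 1) * (p : ℤ)
        = (((t2 : ℕ) : ℤ) - ((t1 : ℕ) : ℤ)) * (p : ℤ) := by push_cast; ring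
    rwa [he] at this
  have hcop : IsCoprime ((k : ℕ) : ℤ) ((p : ℕ) : ℤ) := by
    rw [Int.isCoprime_iff_gcd_eq_one, Int.gcd_natCast_natCast]
    exact hk
  have hdvd2 : ((k : ℕ) : ℤ) ∣ (((t2 : ℕ) : ℤ) - ((t1 : ℕ) : ℤ)) :=
    hcop.dvd_of_dvd_mul_right hdvd
  have hb1 : (t1 : ℕ) < k := by rw [← hK]; exact t1.isLt
  have hb2 : (t2 : ℕ) < k := by rw [← hK]; exact t2.isLt
  have : (((t2 : ℕ) : ℤ) - ((t1 : ℕ) : ℤ)) = 0 := by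
    apply Int.eq_zero_of_abs_lt_dvd hdvd2
    rw [abs_lt]
    constructor <;> push_cast <;> omega
  apply Fin.ext
  omega
end
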